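/- arXiv:1502.06290 — 4 statements merged into one kernel-verified Lean document; each statement's English description precedes it below -/
import Mathlib

section
/- For real numbers a_1,...,a_N and b_1,...,b_N with a = \sum a_i and b = \sum b_i, one has (a^4 + b^2)^{1/4} \le \sum_i (a_i^4 + b_i^2)^{1/4}. -/
/-!
Put `g(x, y) = (x⁴ + y²)^(1/4)`, so that `g(x, y)² = ‖x² + y i‖` in `ℂ` and `|x| ≤ g(x, y)`.
Since `(x₁ + x₂)² ≤ x₁² + x₂² + 2|x₁||x₂|` and the norm of `a + y i` is monotone in `a ≥ 0`,
the triangle inequality in `ℂ` gives `g(x₁ + x₂, y₁ + y₂)² ≤ g₁² + g₂² + 2|x₁||x₂| ≤ (g₁ + g₂)²`.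
Thus `g` is subadditive on `ℝ × ℝ`, and subadditivity passes to finite sums.
-/

open Finset Complex

lemma norm_ofReal_add_mul_I_le_of_le {a a' : ℝ} (y : ℝ) (ha : 0 ≤ a) (haa' : a ≤ a') :
    ‖(a : ℂ) + y * I‖ ≤ ‖(a' : ℂ) + y * I‖ := by
  rw [norm_add_mul_I, norm_add_mul_I]
  gcongr

noncomputable def quarticGauge (x y : ℝ) : ℝ := (x ^ 4 + y ^ 2) ^ ((1 : ℝ) / 4)

lemma quarticGauge_nonneg (x y : ℝ) : 0 ≤ quarticGauge x y :=
  Real.rpow_nonneg (by positivity) _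

lemma quarticGauge_sq (x y : ℝ) : quarticGauge x y ^ 2 = ‖((x ^ 2 : ℝ) : ℂ) + y * I‖ := by
  rw [norm_add_mul_I, quarticGauge, ← Real.rpow_natCast, ← Real.rpow_mul (by positivity),
    Real.sqrt_eq_rpow]
  norm_num
  ring_nf

lemma abs_le_quarticGauge (x y : ℝ) : |x| ≤ quarticGauge x y := by
  refine abs_le_of_sq_le_sq ?_ (quarticGauge_nonneg x y)
  calc x ^ 2 = |(((x ^ 2 : ℝ) : ℂ) + y * I).re| := by
        rw [add_re, ofReal_re, re_ofReal_mul, I_re, mul_zero, add_zero, abs_sq]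
    _ ≤ ‖((x ^ 2 : ℝ) : ℂ) + y * I‖ := abs_re_le_norm _
    _ = quarticGauge x y ^ 2 := (quarticGauge_sq x y).symm

lemma quarticGauge_add_le (x₁ y₁ x₂ y₂ : ℝ) :
    quarticGauge (x₁ + x₂) (y₁ + y₂) ≤ quarticGauge x₁ y₁ + quarticGauge x₂ y₂ := by
  set c := 2 * |x₁| * |x₂|
  have hc : c ≤ 2 * quarticGauge x₁ y₁ * quarticGauge x₂ y₂ := by
    have := mul_le_mul (abs_le_quarticGauge x₁ y₁) (abs_le_quarticGauge x₂ y₂) (abs_nonneg _)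
      (quarticGauge_nonneg x₁ y₁)
    simp only [c]
    linarith
  have hsq : (x₁ + x₂) ^ 2 ≤ x₁ ^ 2 + x₂ ^ 2 + c := by
    nlinarith [abs_mul x₁ x₂, le_abs_self (x₁ * x₂), sq_abs x₁, sq_abs x₂]
  refine le_of_pow_le_pow_left₀ two_ne_zero
    (add_nonneg (quarticGauge_nonneg _ _) (quarticGauge_nonneg _ _)) ?_
  calc quarticGauge (x₁ + x₂) (y₁ + y₂) ^ 2
      = ‖(((x₁ + x₂) ^ 2 : ℝ) : ℂ) + ((y₁ + y₂ : ℝ) : ℂ) * I‖ := quarticGauge_sq _ _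
    _ ≤ ‖((x₁ ^ 2 + x₂ ^ 2 + c : ℝ) : ℂ) + ((y₁ + y₂ : ℝ) : ℂ) * I‖ :=
        norm_ofReal_add_mul_I_le_of_le _ (sq_nonneg _) hsq
    _ = ‖(((x₁ ^ 2 : ℝ) : ℂ) + y₁ * I) + (((x₂ ^ 2 : ℝ) : ℂ) + y₂ * I) + (c : ℂ)‖ := by
        push_cast; ring_nf
    _ ≤ quarticGauge x₁ y₁ ^ 2 + quarticGauge x₂ y₂ ^ 2 + c := by
        rw [quarticGauge_sq, quarticGauge_sq]
        refine norm_add₃_le.trans_eq ?_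
        rw [norm_real, Real.norm_of_nonneg (by positivity)]
    _ ≤ (quarticGauge x₁ y₁ + quarticGauge x₂ y₂) ^ 2 := by nlinarith

theorem subadd_fourth_root (N : ℕ) (a b : Fin N → ℝ) :
    ((∑ i, a i) ^ 4 + (∑ i, b i) ^ 2) ^ ((1 : ℝ) / 4) ≤
      ∑ i, ((a i) ^ 4 + (b i) ^ 2) ^ ((1 : ℝ) / 4) := by
  have := le_sum_of_subadditive (fun p : ℝ × ℝ => quarticGauge p.1 p.2)
    (by simp [quarticGauge]) (fun p q => quarticGauge_add_le p.1 p.2 q.1 q.2) univ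
    (fun i => (a i, b i))
  simpa only [Prod.fst_sum, Prod.snd_sum, quarticGauge] using this
end

section
/- For real numbers a_1,...,a_N and b_1,...,b_N with a = \sum a_i and b = \sum b_i, one has \sqrt{a^2 + \sqrt{a^4 + b^2}} \le \sum_i \sqrt{a_i^2 + \sqrt{a_i^4 + b_i^2}}. -/
/-! Write `F(a, b) = √(a² + √(a⁴ + b²))`. It depends only on `|a|, |b|` and is monotone in both,
so it suffices to show `F(a₁ + a₂, b₁ + b₂) ≤ F(a₁, b₁) + F(a₂, b₂)` for `a₁, a₂ ≥ 0`. Splitting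
`((a₁ + a₂)², b₁ + b₂) = (a₁², b₁) + (a₂², b₂) + (2a₁a₂, 0)`, the triangle inequality in `ℝ²` bounds
the inner root and gives `F(a₁ + a₂, b₁ + b₂)² ≤ F(a₁, b₁)² + F(a₂, b₂)² + 4a₁a₂`; since
`F(aᵢ, bᵢ) ≥ √2 aᵢ`, the last term is at most `2 F(a₁, b₁) F(a₂, b₂)`. Subadditivity then passes
to finite sums. -/

open Finset Real

noncomputable def nestedSqrt (a b : ℝ) : ℝ := √(a ^ 2 + √(a ^ 4 + b ^ 2))

lemma sqrt_add_sq_add_sq_le (x₁ y₁ x₂ y₂ : ℝ) :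
    √((x₁ + x₂) ^ 2 + (y₁ + y₂) ^ 2) ≤ √(x₁ ^ 2 + y₁ ^ 2) + √(x₂ ^ 2 + y₂ ^ 2) := by
  simpa only [Complex.norm_eq_sqrt_sq_add_sq, Complex.add_re, Complex.add_im] using
    norm_add_le (⟨x₁, y₁⟩ : ℂ) ⟨x₂, y₂⟩

lemma nestedSqrt_abs_abs (a b : ℝ) : nestedSqrt |a| |b| = nestedSqrt a b := by
  rw [nestedSqrt, nestedSqrt, sq_abs, sq_abs, Even.pow_abs ⟨2, rfl⟩]

lemma nestedSqrt_le_nestedSqrt {a a' b b' : ℝ} (ha : |a| ≤ a') (hb : |b| ≤ b') :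
    nestedSqrt a b ≤ nestedSqrt a' b' := by
  have ha2 : a ^ 2 ≤ a' ^ 2 := sq_le_sq' (neg_le_of_abs_le ha) (le_of_abs_le ha)
  have hb2 : b ^ 2 ≤ b' ^ 2 := sq_le_sq' (neg_le_of_abs_le hb) (le_of_abs_le hb)
  have ha4 : a ^ 4 ≤ a' ^ 4 := by
    simpa only [← pow_mul] using pow_le_pow_left₀ (sq_nonneg a) ha2 2
  unfold nestedSqrt
  gcongr

lemma sqrt_two_mul_le_nestedSqrt {a : ℝ} (ha : 0 ≤ a) (b : ℝ) : √2 * a ≤ nestedSqrt a b := by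
  have hinner : a ^ 2 ≤ √(a ^ 4 + b ^ 2) :=
    Real.le_sqrt_of_sq_le (by nlinarith [sq_nonneg b])
  rw [nestedSqrt, Real.le_sqrt (by positivity) (by positivity), mul_pow, Real.sq_sqrt zero_le_two]
  linarith

lemma sqrt_add_pow_four_add_sq_le {a₁ a₂ : ℝ} (ha₁ : 0 ≤ a₁) (ha₂ : 0 ≤ a₂) (b₁ b₂ : ℝ) :
    √((a₁ + a₂) ^ 4 + (b₁ + b₂) ^ 2) ≤ √(a₁ ^ 4 + b₁ ^ 2) + √(a₂ ^ 4 + b₂ ^ 2) + 2 * a₁ * a₂ := by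
  have h₁ := sqrt_add_sq_add_sq_le (a₁ ^ 2) b₁ (a₂ ^ 2 + 2 * a₁ * a₂) b₂
  have h₂ := sqrt_add_sq_add_sq_le (a₂ ^ 2) b₂ (2 * a₁ * a₂) 0
  rw [zero_pow two_ne_zero, add_zero, add_zero, Real.sqrt_sq (by positivity)] at h₂
  calc √((a₁ + a₂) ^ 4 + (b₁ + b₂) ^ 2)
      = √((a₁ ^ 2 + (a₂ ^ 2 + 2 * a₁ * a₂)) ^ 2 + (b₁ + b₂) ^ 2) := by ring_nf
    _ ≤ _ := by
      simp only [← pow_mul] at h₁ h₂ ⊢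
      linarith

lemma nestedSqrt_add_le_of_nonneg {a₁ a₂ : ℝ} (ha₁ : 0 ≤ a₁) (ha₂ : 0 ≤ a₂) (b₁ b₂ : ℝ) :
    nestedSqrt (a₁ + a₂) (b₁ + b₂) ≤ nestedSqrt a₁ b₁ + nestedSqrt a₂ b₂ := by
  have hprod : 2 * a₁ * a₂ ≤ nestedSqrt a₁ b₁ * nestedSqrt a₂ b₂ :=
    calc 2 * a₁ * a₂ = √2 * a₁ * (√2 * a₂) := by
          rw [mul_mul_mul_comm, Real.mul_self_sqrt zero_le_two, mul_assoc]
      _ ≤ _ := mul_le_mul (sqrt_two_mul_le_nestedSqrt ha₁ b₁)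
          (sqrt_two_mul_le_nestedSqrt ha₂ b₂) (by positivity) (Real.sqrt_nonneg _)
  have hsq (a b : ℝ) : nestedSqrt a b ^ 2 = a ^ 2 + √(a ^ 4 + b ^ 2) :=
    Real.sq_sqrt (by positivity)
  rw [nestedSqrt, Real.sqrt_le_left (by unfold nestedSqrt; positivity)]
  nlinarith [sqrt_add_pow_four_add_sq_le ha₁ ha₂ b₁ b₂, hsq a₁ b₁, hsq a₂ b₂]

lemma nestedSqrt_add_le (a₁ a₂ b₁ b₂ : ℝ) :
    nestedSqrt (a₁ + a₂) (b₁ + b₂) ≤ nestedSqrt a₁ b₁ + nestedSqrt a₂ b₂ := by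
  calc nestedSqrt (a₁ + a₂) (b₁ + b₂) ≤ nestedSqrt (|a₁| + |a₂|) (|b₁| + |b₂|) :=
        nestedSqrt_le_nestedSqrt (abs_add_le _ _) (abs_add_le _ _)
    _ ≤ nestedSqrt |a₁| |b₁| + nestedSqrt |a₂| |b₂| :=
        nestedSqrt_add_le_of_nonneg (abs_nonneg _) (abs_nonneg _) _ _
    _ = nestedSqrt a₁ b₁ + nestedSqrt a₂ b₂ := by rw [nestedSqrt_abs_abs, nestedSqrt_abs_abs]

theorem subadd_nested_sqrt (N : ℕ) (a b : Fin N → ℝ) :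
    Real.sqrt ((∑ i, a i) ^ 2 + Real.sqrt ((∑ i, a i) ^ 4 + (∑ i, b i) ^ 2)) ≤
      ∑ i, Real.sqrt ((a i) ^ 2 + Real.sqrt ((a i) ^ 4 + (b i) ^ 2)) := by
  have := le_sum_of_subadditive (fun p : ℝ × ℝ ↦ nestedSqrt p.1 p.2)
    (by simp [nestedSqrt]) (fun p q ↦ nestedSqrt_add_le p.1 q.1 p.2 q.2) univ
    (fun i ↦ (a i, b i))
  simpa only [nestedSqrt, Prod.fst_sum, Prod.snd_sum] using this
end

section
/- If real numbers m_1,...,m_N, q_1,...,q_N, J_1,...,J_N satisfy m_i^2 \ge (q_i^2 + \sqrt{q_i^4 + 4 J_i^2})/2 and m_i \ge 0 for each i, then with m = \sum m_i, q = \sum q_i, J = \sum J_i one has m^2 \ge (q^2 + \sqrt{q^4 + 4 J^2})/2. -/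
open Finset Real

private def Good (m q J : ℝ) : Prop := 0 ≤ m ∧ q ^ 2 ≤ m ^ 2 ∧ J ^ 2 ≤ m ^ 2 * (m ^ 2 - q ^ 2)

private lemma quad_ineq (u1 v1 u2 v2 : ℝ) (h1 : 0 ≤ u1) (h2 : 0 ≤ v1)
    (h3 : 0 ≤ u2) (h4 : 0 ≤ v2) :
    (0:ℝ) ≤ (3/4)*v1*u2*v2^2 + (1/1)*v1*u2^2*v2 + (1/4)*v1*u2^3 +
      (1/2)*v1^2*u2*v2 + (1/4)*v1^2*u2^2 + (1/4)*v1^3*u2 + (1/4)*u1*v2^3 +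
      (1/1)*u1*u2*v2^2 + (3/4)*u1*u2^2*v2 + (1/2)*u1*v1*v2^2 + (3/2)*u1*v1*u2*v2 +
      (1/2)*u1*v1*u2^2 + (3/4)*u1*v1^2*v2 + (1/1)*u1*v1^2*u2 + (1/4)*u1^2*v2^2 +
      (1/2)*u1^2*u2*v2 + (1/1)*u1^2*v1*v2 + (3/4)*u1^2*v1*u2 + (1/4)*u1^3*v2 := by positivity

private lemma good_add {m1 q1 J1 m2 q2 J2 : ℝ} (h1 : Good m1 q1 J1) (h2 : Good m2 q2 J2) :
    Good (m1 + m2) (q1 + q2) (J1 + J2) := by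
  obtain ⟨hm1, hq1, hJ1⟩ := h1
  obtain ⟨hm2, hq2, hJ2⟩ := h2
  have haq1 : |q1| ≤ m1 := by
    rw [← Real.sqrt_sq_eq_abs]
    calc Real.sqrt (q1 ^ 2) ≤ Real.sqrt (m1 ^ 2) := Real.sqrt_le_sqrt hq1
    _ = m1 := Real.sqrt_sq hm1
  have haq2 : |q2| ≤ m2 := by
    rw [← Real.sqrt_sq_eq_abs]
    calc Real.sqrt (q2 ^ 2) ≤ Real.sqrt (m2 ^ 2) := Real.sqrt_le_sqrt hq2
    _ = m2 := Real.sqrt_sq hm2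
  have hq1' := abs_le.mp haq1
  have hq2' := abs_le.mp haq2
  refine ⟨by linarith, by nlinarith, ?_⟩
  set b1 := Real.sqrt (m1 ^ 2 - q1 ^ 2) with hb1def
  set b2 := Real.sqrt (m2 ^ 2 - q2 ^ 2) with hb2def
  have hb1 : 0 ≤ b1 := Real.sqrt_nonneg _
  have hb2 : 0 ≤ b2 := Real.sqrt_nonneg _
  have hb1sq : b1 ^ 2 = m1 ^ 2 - q1 ^ 2 := Real.sq_sqrt (by linarith)
  have hb2sq : b2 ^ 2 = m2 ^ 2 - q2 ^ 2 := Real.sq_sqrt (by linarith)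
  -- |J1| ≤ m1 * b1
  have hJ1' : |J1| ≤ m1 * b1 := by
    rw [← Real.sqrt_sq_eq_abs]
    calc Real.sqrt (J1 ^ 2) ≤ Real.sqrt ((m1 * b1) ^ 2) := by
          apply Real.sqrt_le_sqrt; rw [mul_pow, hb1sq]; linarith
    _ = m1 * b1 := Real.sqrt_sq (mul_nonneg hm1 hb1)
  have hJ2' : |J2| ≤ m2 * b2 := by
    rw [← Real.sqrt_sq_eq_abs]
    calc Real.sqrt (J2 ^ 2) ≤ Real.sqrt ((m2 * b2) ^ 2) := by
          apply Real.sqrt_le_sqrt; rw [mul_pow, hb2sq]; linarith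
    _ = m2 * b2 := Real.sqrt_sq (mul_nonneg hm2 hb2)
  -- b1 * b2 ≤ m1 * m2 - q1 * q2
  have hbb : b1 * b2 ≤ m1 * m2 - q1 * q2 := by
    have h1 : (b1 * b2) ^ 2 ≤ (m1 * m2 - q1 * q2) ^ 2 := by
      rw [mul_pow, hb1sq, hb2sq]; nlinarith [sq_nonneg (m1 * q2 - m2 * q1)]
    have h2 : 0 ≤ m1 * m2 - q1 * q2 := by nlinarith [abs_mul q1 q2, abs_le.mpr ⟨hq1'.1, hq1'.2⟩]
    nlinarith [mul_nonneg hb1 hb2]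
  have hJabs : (J1 + J2) ^ 2 ≤ (m1 * b1 + m2 * b2) ^ 2 := by
    have : |J1 + J2| ≤ m1 * b1 + m2 * b2 :=
      (abs_add_le J1 J2).trans (by linarith)
    calc (J1 + J2) ^ 2 = |J1 + J2| ^ 2 := (sq_abs _).symm
    _ ≤ (m1 * b1 + m2 * b2) ^ 2 := by
        apply pow_le_pow_left₀ (abs_nonneg _) this
  have key : (m1 * b1 + m2 * b2) ^ 2 ≤ (m1 + m2) ^ 2 * ((m1 + m2) ^ 2 - (q1 + q2) ^ 2) := by
    have e1 : (m1 * b1 + m2 * b2) ^ 2 ≤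
        m1 ^ 2 * (m1 ^ 2 - q1 ^ 2) + m2 ^ 2 * (m2 ^ 2 - q2 ^ 2) +
          2 * (m1 * m2) * (m1 * m2 - q1 * q2) := by
      have expand : (m1 * b1 + m2 * b2) ^ 2 =
          m1 ^ 2 * b1 ^ 2 + m2 ^ 2 * b2 ^ 2 + 2 * (m1 * m2) * (b1 * b2) := by ring
      rw [expand, hb1sq, hb2sq]
      have hstep := mul_le_mul_of_nonneg_left hbb (mul_nonneg hm1 hm2)
      linarith [hstep]
    have hp1 : 0 ≤ m1 - q1 := by linarith [hq1'.2]
    have hp2 : 0 ≤ m1 + q1 := by linarith [hq1'.1]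
    have hp3 : 0 ≤ m2 - q2 := by linarith [hq2'.2]
    have hp4 : 0 ≤ m2 + q2 := by linarith [hq2'.1]
    have e2 : m1 ^ 2 * (m1 ^ 2 - q1 ^ 2) + m2 ^ 2 * (m2 ^ 2 - q2 ^ 2) +
          2 * (m1 * m2) * (m1 * m2 - q1 * q2) ≤
        (m1 + m2) ^ 2 * ((m1 + m2) ^ 2 - (q1 + q2) ^ 2) := by
      have hpos := quad_ineq (m1 - q1) (m1 + q1) (m2 - q2) (m2 + q2) hp1 hp2 hp3 hp4
      linarith [hpos]
    linarith
  linarith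

theorem multi_black_hole_mass_bound (N : ℕ) (m q J : Fin N → ℝ)
    (hm : ∀ i, 0 ≤ m i)
    (h : ∀ i, (m i) ^ 2 ≥ ((q i) ^ 2 + Real.sqrt ((q i) ^ 4 + 4 * (J i) ^ 2)) / 2) :
    (∑ i, m i) ^ 2 ≥
      ((∑ i, q i) ^ 2 + Real.sqrt ((∑ i, q i) ^ 4 + 4 * (∑ i, J i) ^ 2)) / 2 := by
  have hgood : ∀ i, Good (m i) (q i) (J i) := by
    intro i
    have hi := h i
    have hnn : (0:ℝ) ≤ (q i) ^ 4 + 4 * (J i) ^ 2 := by positivity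
    have hs1 : (q i) ^ 2 ≤ Real.sqrt ((q i) ^ 4 + 4 * (J i) ^ 2) := by
      have : Real.sqrt ((q i) ^ 2 * (q i) ^ 2) ≤ Real.sqrt ((q i) ^ 4 + 4 * (J i) ^ 2) := by
        apply Real.sqrt_le_sqrt; nlinarith [sq_nonneg (J i)]
      rwa [Real.sqrt_mul_self (sq_nonneg _)] at this
    have hq : (q i) ^ 2 ≤ (m i) ^ 2 := by linarith
    have hs2 : Real.sqrt ((q i) ^ 4 + 4 * (J i) ^ 2) ≤ 2 * (m i) ^ 2 - (q i) ^ 2 := by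
      linarith
    have hsq : (q i) ^ 4 + 4 * (J i) ^ 2 ≤ (2 * (m i) ^ 2 - (q i) ^ 2) ^ 2 := by
      have := pow_le_pow_left₀ (Real.sqrt_nonneg _) hs2 2
      rwa [Real.sq_sqrt hnn] at this
    exact ⟨hm i, hq, by nlinarith⟩
  have hsum : Good (∑ i, m i) (∑ i, q i) (∑ i, J i) := by
    classical
    have : ∀ s : Finset (Fin N), Good (∑ i ∈ s, m i) (∑ i ∈ s, q i) (∑ i ∈ s, J i) := by
      intro s
      induction s using Finset.cons_induction with
      | empty => simp [Good]
      | cons a s ha ih =>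
        simp only [Finset.sum_cons]
        exact good_add (hgood a) ih
    exact this Finset.univ
  obtain ⟨hM, hQ, hJ⟩ := hsum
  set M := ∑ i, m i
  set Q := ∑ i, q i
  set JT := ∑ i, J i
  have hnn : (0:ℝ) ≤ Q ^ 4 + 4 * JT ^ 2 := by positivity
  have hle : Real.sqrt (Q ^ 4 + 4 * JT ^ 2) ≤ 2 * M ^ 2 - Q ^ 2 := by
    have h1 : Q ^ 4 + 4 * JT ^ 2 ≤ (2 * M ^ 2 - Q ^ 2) ^ 2 := by nlinarith
    calc Real.sqrt (Q ^ 4 + 4 * JT ^ 2) ≤ Real.sqrt ((2 * M ^ 2 - Q ^ 2) ^ 2) :=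
          Real.sqrt_le_sqrt h1
    _ = 2 * M ^ 2 - Q ^ 2 := Real.sqrt_sq (by nlinarith [sq_nonneg M])
  linarith
end

section
/- Let f : \mathbb{R}^3 \setminus \Gamma \to \mathbb{R} be a nonnegative subharmonic function (\Delta f \ge 0) on the complement of the z-axis \Gamma, bounded on \mathbb{R}^3 \setminus \Gamma, with f(x) \to 0 as |x| \to \infty. Suppose in addition f extends continuously by 0 to \Gamma minus finitely many points, and f remains bounded near those points. Then f \equiv 0. -/
/-!
A maximum principle with two perturbations. Fix `ε > 0` and put `V x = ∑_{p ∈ P} 1 / ‖x - p‖`.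
In dimension at least three `V` is superharmonic off `P`, and it tends to `+∞` at every point of
`P`, where only the boundedness of `f` is known. Choose `R` with `f < ε` outside the ball of
radius `R`; then `W = f - ε V + (ε / R²) ‖x‖²` is strictly subharmonic on `U = Γᶜ ∩ B(0, R)`, so
it has no interior maximum, and near every boundary point of `U` it is eventually below `2ε`.
Compactness of `{x ∈ U | W x ≥ 2ε}` then forces `W < 2ε` on `U`, i.e. `f ≤ ε (2 + V)`, and
letting `ε → 0` gives `f ≤ 0`.
-/

open MeasureTheory Filter Topology Set

noncomputable def laplacian (f : EuclideanSpace ℝ (Fin 3) → ℝ)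
    (x : EuclideanSpace ℝ (Fin 3)) : ℝ :=
  ∑ i : Fin 3, fderiv ℝ (fun y => fderiv ℝ f y (EuclideanSpace.single i 1)) x
    (EuclideanSpace.single i 1)

open scoped RealInnerProductSpace Laplacian

section SecondDerivativeTest

variable {E : Type*} [NormedAddCommGroup E] [NormedSpace ℝ E]

theorem IsLocalMax.deriv_deriv_nonpos {g : ℝ → ℝ} {t : ℝ} (h : IsLocalMax g t)
    (hg : ContinuousAt g t) : deriv (deriv g) t ≤ 0 := by
  by_contra! hpos
  -- then `t` is also a local minimum by the second-derivative test, so `g` is locally constant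
  have hmin : IsLocalMin g t := isLocalMin_of_deriv_deriv_pos hpos h.deriv_eq_zero hg
  have hconst : g =ᶠ[𝓝 t] fun _ => g t := by
    filter_upwards [h, hmin] with s hs₁ hs₂ using le_antisymm hs₁ hs₂
  have hderiv : deriv g =ᶠ[𝓝 t] fun _ => 0 := by
    filter_upwards [hconst.eventuallyEq_nhds] with s hs
    rw [hs.deriv_eq, deriv_const]
  rw [hderiv.deriv_eq, deriv_const] at hpos
  exact hpos.false

theorem IsLocalMax.fderiv_fderiv_apply_self_nonpos {f : E → ℝ} {a : E} (h : IsLocalMax f a)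
    (hf : ContDiffAt ℝ 2 f a) (v : E) : fderiv ℝ (fderiv ℝ f) a v v ≤ 0 := by
  set γ : ℝ → E := fun s => a + s • v
  have hγ : ∀ t : ℝ, HasDerivAt γ v t := fun t =>
    (((hasDerivAt_id t).smul_const v).const_add a).congr_deriv (one_smul ℝ v)
  have hγ0 : γ 0 = a := by simp [γ]
  have hmax : IsLocalMax (f ∘ γ) 0 := (hγ0 ▸ h).comp_continuous (hγ 0).continuousAt
  have hfirst : deriv (f ∘ γ) =ᶠ[𝓝 0] fun s => fderiv ℝ f (γ s) v := by
    have hdiff : ∀ᶠ y in 𝓝 a, DifferentiableAt ℝ f y :=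
      (hf.eventually (by simp)).mono fun y hy => hy.differentiableAt two_ne_zero
    filter_upwards [(hγ0 ▸ (hγ 0).continuousAt.tendsto).eventually hdiff] with s hs
    exact (hs.hasFDerivAt.comp_hasDerivAt s (hγ s)).deriv
  have hD : DifferentiableAt ℝ (fderiv ℝ f) (γ 0) :=
    hγ0 ▸ (hf.fderiv_right (m := 1) le_rfl).differentiableAt one_ne_zero
  have hsecond : HasDerivAt (fun s => fderiv ℝ f (γ s) v) (fderiv ℝ (fderiv ℝ f) a v v) 0 := by
    have := (hD.hasFDerivAt.comp_hasDerivAt 0 (hγ 0)).clm_apply (hasDerivAt_const 0 v)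
    rw [hγ0] at this
    simpa using this
  rw [← hsecond.deriv, ← hfirst.deriv_eq]
  exact hmax.deriv_deriv_nonpos (hf.continuousAt.comp_of_eq (hγ 0).continuousAt hγ0)

end SecondDerivativeTest

section Laplacian

variable {E : Type*} [NormedAddCommGroup E] [InnerProductSpace ℝ E] [FiniteDimensional ℝ E]

theorem laplacian_eq_sum_fderiv_fderiv {ι : Type*} [Fintype ι] (b : OrthonormalBasis ι ℝ E)
    (f : E → ℝ) (x : E) : Δ f x = ∑ i, fderiv ℝ (fderiv ℝ f) x (b i) (b i) := by
  simp [InnerProductSpace.laplacian_eq_iteratedFDeriv_orthonormalBasis f b,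
    iteratedFDeriv_two_apply]

theorem IsLocalMax.laplacian_nonpos {f : E → ℝ} {a : E} (h : IsLocalMax f a)
    (hf : ContDiffAt ℝ 2 f a) : Δ f a ≤ 0 := by
  rw [laplacian_eq_sum_fderiv_fderiv (stdOrthonormalBasis ℝ E)]
  exact Finset.sum_nonpos fun i _ => h.fderiv_fderiv_apply_self_nonpos hf _

theorem lt_of_laplacian_pos_of_eventually_lt_frontier {U : Set E} (hU : IsOpen U)
    (hUb : Bornology.IsBounded U) {W : E → ℝ} {c : ℝ} (hW : ContDiffOn ℝ 2 W U)
    (hΔ : ∀ x ∈ U, 0 < Δ W x) (hfr : ∀ z ∈ frontier U, ∀ᶠ x in 𝓝[U] z, W x < c)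
    {x : E} (hx : x ∈ U) : W x < c := by
  by_contra! hcx
  set T := {y ∈ U | c ≤ W y}
  have hWcont : ∀ y ∈ U, ContinuousAt W y := fun y hy =>
    hW.continuousOn.continuousAt (hU.mem_nhds hy)
  have hTclosed : IsClosed T := by
    refine isClosed_of_closure_subset fun z hz => ?_
    by_cases hzU : z ∈ U
    · exact ⟨hzU, continuousWithinAt_const.closure_le hz (hWcont z hzU).continuousWithinAt
        fun y hy => hy.2⟩
    · have hzfr : z ∈ frontier U := by
        rw [hU.frontier_eq]
        exact ⟨closure_mono (sep_subset _ _) hz, hzU⟩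
      have := mem_closure_iff_nhdsWithin_neBot.1 hz
      obtain ⟨y, hlt, hle⟩ := (((hfr z hzfr).filter_mono (nhdsWithin_mono _ (sep_subset _ _))).and
        (eventually_nhdsWithin_of_forall fun y (hy : y ∈ T) => hy.2)).exists
      exact absurd hle (not_le.2 hlt)
  obtain ⟨a, ⟨haU, hca⟩, hamax⟩ :=
    (Metric.isCompact_of_isClosed_isBounded hTclosed (hUb.subset (sep_subset _ _))).exists_isMaxOn
      ⟨x, hx, hcx⟩ fun y hy => (hWcont y hy.1).continuousWithinAt
  have hmaxU : IsMaxOn W U a := fun y hy => by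
    by_cases hcy : c ≤ W y
    · exact hamax ⟨hy, hcy⟩
    · exact (not_le.1 hcy).le.trans hca
  have := (hmaxU.isLocalMax (hU.mem_nhds haU)).laplacian_nonpos (hW.contDiffAt (hU.mem_nhds haU))
  linarith [hΔ a haU]

theorem laplacian_sum {ι : Type*} (s : Finset ι) {g : ι → E → ℝ} {x : E}
    (hg : ∀ i ∈ s, ContDiffAt ℝ 2 (g i) x) :
    Δ (fun y => ∑ i ∈ s, g i y) x = ∑ i ∈ s, Δ (g i) x := by
  classical
  induction s using Finset.induction_on with
  | empty => simp
  | insert a s ha ih =>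
    have hs : ∀ i ∈ s, ContDiffAt ℝ 2 (g i) x := fun i hi => hg i (Finset.mem_insert_of_mem hi)
    simp only [Finset.sum_insert ha]
    rw [← ih hs]
    exact (hg a (Finset.mem_insert_self a s)).laplacian_add (ContDiffAt.sum hs)

theorem laplacian_norm_sq (x : E) : Δ (fun y : E => ‖y‖ ^ 2) x = 2 * Module.finrank ℝ E := by
  have hsecond (v : E) : fderiv ℝ (fderiv ℝ fun y : E => ‖y‖ ^ 2) x v v = 2 * ‖v‖ ^ 2 := by
    rw [fderiv_norm_sq, ← FunLike.coe_smul, ContinuousLinearMap.fderiv]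
    simp only [smul_apply, nsmul_eq_mul, Nat.cast_ofNat, mul_eq_mul_left_iff,
      OfNat.ofNat_ne_zero, or_false]
    rw [innerSL_apply_apply, real_inner_self_eq_norm_sq]
  simp [laplacian_eq_sum_fderiv_fderiv (stdOrthonormalBasis ℝ E), hsecond]
  ring

end Laplacian

section InverseDistance

variable {E : Type*} [NormedAddCommGroup E] [InnerProductSpace ℝ E]

theorem contDiffAt_inv_norm_sub {n : WithTop ℕ∞} {p x : E} (hx : x ≠ p) :
    ContDiffAt ℝ n (fun y => ‖y - p‖⁻¹) x :=
  ((contDiffAt_id.sub contDiffAt_const).norm ℝ (sub_ne_zero.2 hx)).inv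
    (norm_ne_zero_iff.2 (sub_ne_zero.2 hx))

theorem hasFDerivAt_inv_norm_sub {p x : E} (hx : x ≠ p) :
    HasFDerivAt (fun y => ‖y - p‖⁻¹) (-(‖x - p‖⁻¹ ^ 3) • innerSL ℝ (x - p)) x := by
  have hpos : 0 < ‖x - p‖ := norm_pos_iff.2 (sub_ne_zero.2 hx)
  have hnorm : HasFDerivAt (fun y => ‖y - p‖) (‖x - p‖⁻¹ • innerSL ℝ (x - p)) x := by
    have := (((hasFDerivAt_id x).sub_const p).norm_sq).sqrt (by positivity)
    simp only [Real.sqrt_sq (norm_nonneg _)] at this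
    refine this.congr_fderiv (ContinuousLinearMap.ext fun w => ?_)
    simp only [id_eq, one_div, mul_inv_rev, map_sub, ContinuousLinearMap.comp_id, smul_apply,
      sub_apply, coe_innerSL_apply, nsmul_eq_mul, Nat.cast_ofNat, smul_eq_mul]
    field_simp
  refine ((hasDerivAt_inv hpos.ne').comp_hasFDerivAt x hnorm).congr_fderiv
    (ContinuousLinearMap.ext fun w => ?_)
  simp only [map_sub, neg_smul, neg_apply, smul_apply, sub_apply, coe_innerSL_apply, smul_eq_mul,
    inv_pow, neg_inj]
  field_simp

theorem fderiv_fderiv_inv_norm_sub_apply {p x : E} (hx : x ≠ p) (v : E) :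
    fderiv ℝ (fderiv ℝ fun y => ‖y - p‖⁻¹) x v v =
      3 * ‖x - p‖⁻¹ ^ 5 * ⟪x - p, v⟫ ^ 2 - ‖x - p‖⁻¹ ^ 3 * ‖v‖ ^ 2 := by
  have hfirst : (fderiv ℝ fun y => ‖y - p‖⁻¹) =ᶠ[𝓝 x]
      fun y => -(‖y - p‖⁻¹ ^ 3) • innerSL ℝ (y - p) := by
    filter_upwards [isOpen_ne.mem_nhds hx] with y hy
    exact (hasFDerivAt_inv_norm_sub hy).fderiv
  have hsecond : HasFDerivAt (fun y => -(‖y - p‖⁻¹ ^ 3) • innerSL ℝ (y - p)) _ x :=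
    (((hasFDerivAt_inv_norm_sub hx).pow 3).neg).smul
      ((innerSL ℝ : E →L[ℝ] E →L[ℝ] ℝ).hasFDerivAt.comp x ((hasFDerivAt_id x).sub_const p))
  rw [hfirst.fderiv_eq, hsecond.fderiv]
  simp only [inv_pow, Pi.neg_apply, ContinuousLinearMap.comp_id, neg_smul, Nat.add_one_sub_one,
    nsmul_eq_mul, Nat.cast_ofNat, map_sub, smul_neg, neg_neg, add_apply, neg_apply, smul_apply,
    ContinuousLinearMap.smulRight_apply, sub_apply, coe_innerSL_apply, smul_eq_mul, inner_sub_left]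
  rw [innerSL_apply_apply, real_inner_self_eq_norm_sq]
  ring

theorem laplacian_inv_norm_sub [FiniteDimensional ℝ E] {p x : E} (hx : x ≠ p) :
    Δ (fun y => ‖y - p‖⁻¹) x = (3 - Module.finrank ℝ E) * ‖x - p‖⁻¹ ^ 3 := by
  have hpos : 0 < ‖x - p‖ := norm_pos_iff.2 (sub_ne_zero.2 hx)
  set b := stdOrthonormalBasis ℝ E
  simp only [laplacian_eq_sum_fderiv_fderiv b, fderiv_fderiv_inv_norm_sub_apply hx,
    Finset.sum_sub_distrib, ← Finset.mul_sum, b.sum_sq_inner_left, b.orthonormal.1, inv_pow,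
    one_pow, Finset.sum_const, Finset.card_univ, Fintype.card_fin, nsmul_eq_mul, mul_one]
  field_simp

end InverseDistance

section CoulombPotential

variable {E : Type*} [NormedAddCommGroup E]

noncomputable def coulombPotential (s : Finset E) (x : E) : ℝ := ∑ p ∈ s, ‖x - p‖⁻¹

theorem coulombPotential_nonneg (s : Finset E) (x : E) : 0 ≤ coulombPotential s x :=
  Finset.sum_nonneg fun _ _ => inv_nonneg.2 (norm_nonneg _)

theorem tendsto_coulombPotential_nhdsNE {s : Finset E} {p : E} (hp : p ∈ s) :
    Tendsto (coulombPotential s) (𝓝[≠] p) atTop :=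
  tendsto_atTop_mono
    (fun x => Finset.single_le_sum (f := fun q => ‖x - q‖⁻¹)
      (fun _ _ => inv_nonneg.2 (norm_nonneg _)) hp)
    (tendsto_norm_sub_self_nhdsNE p).inv_tendsto_nhdsGT_zero

variable [InnerProductSpace ℝ E]

theorem contDiffAt_coulombPotential {s : Finset E} {x : E} (hx : x ∉ s) :
    ContDiffAt ℝ 2 (coulombPotential s) x :=
  ContDiffAt.sum fun _ hp => contDiffAt_inv_norm_sub (ne_of_mem_of_not_mem hp hx).symm

theorem laplacian_coulombPotential_nonpos [FiniteDimensional ℝ E]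
    (hE : 3 ≤ Module.finrank ℝ E) {s : Finset E} {x : E} (hx : x ∉ s) :
    Δ (coulombPotential s) x ≤ 0 := by
  have hne : ∀ p ∈ s, x ≠ p := fun p hp => (ne_of_mem_of_not_mem hp hx).symm
  change Δ (fun y => ∑ p ∈ s, ‖y - p‖⁻¹) x ≤ 0
  rw [laplacian_sum s fun p hp => contDiffAt_inv_norm_sub (hne p hp)]
  refine Finset.sum_nonpos fun p hp => ?_
  rw [laplacian_inv_norm_sub (hne p hp)]
  exact mul_nonpos_of_nonpos_of_nonneg (sub_nonpos.2 (by exact_mod_cast hE)) (by positivity)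

end CoulombPotential

section MaximumPrinciple

variable {E : Type*} [NormedAddCommGroup E]

theorem eventually_sub_smul_coulombPotential_lt_of_mem_frontier {f : E → ℝ} {Γ P : Set E}
    (hΓ : IsClosed Γ) (hP : P.Finite) (hf : ContinuousOn f Γᶜ) {C : ℝ}
    (hC : ∀ x ∈ Γᶜ, f x ≤ C) (haxis : ∀ z ∈ Γ \ P, Tendsto f (𝓝[Γᶜ] z) (𝓝 0))
    {ε R : ℝ} (hε : 0 < ε) (hR : ∀ x ∈ Γᶜ, R ≤ ‖x‖ → f x < ε) {z : E}
    (hz : z ∈ frontier (Γᶜ ∩ Metric.ball 0 R)) :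
    ∀ᶠ x in 𝓝[Γᶜ ∩ Metric.ball 0 R] z, f x - ε * coulombPotential hP.toFinset x < ε := by
  have hV : ∀ x, 0 ≤ ε * coulombPotential hP.toFinset x := fun x =>
    mul_nonneg hε.le (coulombPotential_nonneg _ x)
  rw [(hΓ.isOpen_compl.inter Metric.isOpen_ball).frontier_eq] at hz
  obtain ⟨-, hzU⟩ := hz
  by_cases hzΓ : z ∈ Γ
  · by_cases hzP : z ∈ P
    · have hnhds : 𝓝[Γᶜ ∩ Metric.ball 0 R] z ≤ 𝓝[≠] z :=
        nhdsWithin_mono _ fun x hx hxz => hx.1 (hxz ▸ hzΓ)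
      filter_upwards [self_mem_nhdsWithin, ((tendsto_coulombPotential_nhdsNE
        (hP.mem_toFinset.2 hzP)).mono_left hnhds).eventually_gt_atTop ((C - ε) / ε)]
        with x hxU hxV
      linarith [hC x hxU.1, (div_lt_iff₀' hε).1 hxV]
    · filter_upwards [((haxis z ⟨hzΓ, hzP⟩).mono_left
        (nhdsWithin_mono _ inter_subset_left)).eventually (gt_mem_nhds hε)] with x hx
      linarith [hV x]
  · have hzR : R ≤ ‖z‖ := by
      simpa [hzΓ] using hzU
    have hcont : ContinuousAt f z := hf.continuousAt (hΓ.isOpen_compl.mem_nhds hzΓ)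
    filter_upwards [nhdsWithin_le_nhds (hcont.eventually (gt_mem_nhds (hR z hzΓ hzR)))] with x hx
    linarith [hV x]

variable [InnerProductSpace ℝ E] [FiniteDimensional ℝ E]

theorem le_mul_two_add_coulombPotential (hE : 3 ≤ Module.finrank ℝ E) {f : E → ℝ} {Γ P : Set E}
    (hΓ : IsClosed Γ) (hP : P.Finite) (hPΓ : P ⊆ Γ) (hf : ContDiffOn ℝ 2 f Γᶜ)
    (hsub : ∀ x ∈ Γᶜ, 0 ≤ Δ f x) {C : ℝ} (hC : ∀ x ∈ Γᶜ, f x ≤ C)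
    (hinf : Tendsto f (comap norm atTop ⊓ 𝓟 Γᶜ) (𝓝 0))
    (haxis : ∀ z ∈ Γ \ P, Tendsto f (𝓝[Γᶜ] z) (𝓝 0)) {ε : ℝ} (hε : 0 < ε) {x₀ : E}
    (hx₀ : x₀ ∈ Γᶜ) : f x₀ ≤ ε * (2 + coulombPotential hP.toFinset x₀) := by
  obtain ⟨R₀, hR₀⟩ : ∃ R₀, ∀ x ∈ Γᶜ, R₀ ≤ ‖x‖ → f x < ε := by
    have := hinf.eventually (gt_mem_nhds hε)
    rw [eventually_inf_principal, eventually_comap, eventually_atTop] at this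
    obtain ⟨R₀, h⟩ := this
    exact ⟨R₀, fun x hx hxR => h ‖x‖ hxR x rfl hx⟩
  set R := max R₀ (‖x₀‖ + 1)
  have hx₀R : ‖x₀‖ < R := (lt_add_one _).trans_le (le_max_right _ _)
  have hRpos : 0 < R := (norm_nonneg x₀).trans_lt hx₀R
  set U := Γᶜ ∩ Metric.ball (0 : E) R
  set V := coulombPotential hP.toFinset
  set δ := ε / R ^ 2
  set W : E → ℝ := f - ε • V + δ • fun x => ‖x‖ ^ 2
  have hfx : ∀ x ∈ Γᶜ, ContDiffAt ℝ 2 f x := fun x hx =>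
    hf.contDiffAt (hΓ.isOpen_compl.mem_nhds hx)
  have hVx : ∀ x ∈ Γᶜ, ContDiffAt ℝ 2 V x := fun x hx =>
    contDiffAt_coulombPotential fun hxs => hx (hPΓ (hP.mem_toFinset.1 hxs))
  have hsq : ContDiff ℝ 2 fun x : E => ‖x‖ ^ 2 := contDiff_norm_sq ℝ
  have hWx : ∀ x ∈ Γᶜ, ContDiffAt ℝ 2 W x := fun x hx =>
    ((hfx x hx).sub ((hVx x hx).const_smul ε)).add (hsq.contDiffAt.const_smul δ)
  have hΔ : ∀ x ∈ U, 0 < Δ W x := fun x hx => by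
    have hfV : ContDiffAt ℝ 2 (f - ε • V) x := (hfx x hx.1).sub ((hVx x hx.1).const_smul ε)
    rw [hfV.laplacian_add (f₂ := δ • fun x : E => ‖x‖ ^ 2) (hsq.contDiffAt.const_smul δ),
      (hfx x hx.1).laplacian_sub (f₂ := ε • V) ((hVx x hx.1).const_smul ε),
      InnerProductSpace.laplacian_smul ε (hVx x hx.1),
      InnerProductSpace.laplacian_smul δ hsq.contDiffAt, laplacian_norm_sq]
    have hΔV := laplacian_coulombPotential_nonpos hE fun hxs => hx.1 (hPΓ (hP.mem_toFinset.1 hxs))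
    have hrank : (0 : ℝ) < Module.finrank ℝ E := by
      exact_mod_cast (by omega : 0 < Module.finrank ℝ E)
    simp only [smul_eq_mul]
    linarith [hsub x hx.1, mul_nonpos_of_nonneg_of_nonpos hε.le hΔV,
      mul_pos (div_pos hε (pow_pos hRpos 2)) hrank]
  have hquad : ∀ x ∈ U, δ * ‖x‖ ^ 2 < ε := fun x hx => by
    have : ‖x‖ < R := mem_ball_zero_iff.1 hx.2
    calc δ * ‖x‖ ^ 2 < δ * R ^ 2 := by gcongr
      _ = ε := div_mul_cancel₀ _ (pow_ne_zero 2 hRpos.ne')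
  have hfr : ∀ z ∈ frontier U, ∀ᶠ x in 𝓝[U] z, W x < 2 * ε := fun z hz => by
    filter_upwards [eventually_sub_smul_coulombPotential_lt_of_mem_frontier hΓ hP hf.continuousOn
      hC haxis hε (fun x hx hxR => hR₀ x hx ((le_max_left _ _).trans hxR)) hz,
      self_mem_nhdsWithin] with x hx hxU
    simp only [W, Pi.add_apply, Pi.sub_apply, Pi.smul_apply, smul_eq_mul]
    linarith [hquad x hxU]
  have hW₀ := lt_of_laplacian_pos_of_eventually_lt_frontier
    (hΓ.isOpen_compl.inter Metric.isOpen_ball) (Metric.isBounded_ball.subset inter_subset_right)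
    (fun x hx => (hWx x hx.1).contDiffWithinAt) hΔ hfr (x := x₀) ⟨hx₀, mem_ball_zero_iff.2 hx₀R⟩
  simp only [W, Pi.add_apply, Pi.sub_apply, Pi.smul_apply, smul_eq_mul] at hW₀
  linarith [mul_nonneg (div_pos hε (pow_pos hRpos 2)).le (sq_nonneg ‖x₀‖)]

theorem nonpos_of_subharmonic_of_tendsto_zero (hE : 3 ≤ Module.finrank ℝ E) {f : E → ℝ}
    {Γ P : Set E} (hΓ : IsClosed Γ) (hP : P.Finite) (hPΓ : P ⊆ Γ) (hf : ContDiffOn ℝ 2 f Γᶜ)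
    (hsub : ∀ x ∈ Γᶜ, 0 ≤ Δ f x) {C : ℝ} (hC : ∀ x ∈ Γᶜ, f x ≤ C)
    (hinf : Tendsto f (comap norm atTop ⊓ 𝓟 Γᶜ) (𝓝 0))
    (haxis : ∀ z ∈ Γ \ P, Tendsto f (𝓝[Γᶜ] z) (𝓝 0)) {x₀ : E} (hx₀ : x₀ ∈ Γᶜ) : f x₀ ≤ 0 := by
  have hK : 0 < 2 + coulombPotential hP.toFinset x₀ := by
    linarith [coulombPotential_nonneg hP.toFinset x₀]
  refine le_of_forall_pos_le_add fun η hη => ?_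
  have := le_mul_two_add_coulombPotential hE hΓ hP hPΓ hf hsub hC hinf haxis (div_pos hη hK) hx₀
  rw [div_mul_cancel₀ _ hK.ne'] at this
  linarith

end MaximumPrinciple

theorem laplacian_eq_laplacian_of_contDiffAt {f : EuclideanSpace ℝ (Fin 3) → ℝ}
    {x : EuclideanSpace ℝ (Fin 3)} (hf : ContDiffAt ℝ 2 f x) : laplacian f x = Δ f x := by
  have hD : DifferentiableAt ℝ (fderiv ℝ f) x :=
    (hf.fderiv_right (m := 1) le_rfl).differentiableAt one_ne_zero
  rw [laplacian_eq_sum_fderiv_fderiv (EuclideanSpace.basisFun (Fin 3) ℝ), laplacian]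
  refine Finset.sum_congr rfl fun i _ => ?_
  rw [fderiv_clm_apply hD (differentiableAt_const _)]
  simp

/-- A nonnegative bounded subharmonic function on the complement of the z-axis Γ,
tending to 0 at infinity and extending continuously by 0 to Γ minus finitely
many points, vanishes identically. -/
theorem subharmonic_vanishes
    (f : EuclideanSpace ℝ (Fin 3) → ℝ)
    (Γ : Set (EuclideanSpace ℝ (Fin 3)))
    (hΓ : Γ = {x | x 0 = 0 ∧ x 1 = 0})
    (P : Set (EuclideanSpace ℝ (Fin 3))) (hP : P.Finite) (hPΓ : P ⊆ Γ)
    (hsmooth : ContDiffOn ℝ 2 f Γᶜ)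
    (hnonneg : ∀ x ∈ Γᶜ, 0 ≤ f x)
    (hsub : ∀ x ∈ Γᶜ, 0 ≤ laplacian f x)
    (hbdd : ∃ C : ℝ, ∀ x ∈ Γᶜ, f x ≤ C)
    (hinf : Tendsto f (Filter.comap norm Filter.atTop ⊓ Filter.principal Γᶜ) (𝓝 0))
    (haxis : ∀ z ∈ Γ \ P, Tendsto f (nhdsWithin z Γᶜ) (𝓝 0)) :
    ∀ x ∈ Γᶜ, f x = 0 := by
  have hΓclosed : IsClosed Γ := hΓ ▸
    (isClosed_eq (by fun_prop) continuous_const).inter (isClosed_eq (by fun_prop) continuous_const)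
  have hrank : 3 ≤ Module.finrank ℝ (EuclideanSpace ℝ (Fin 3)) := by simp
  have hsub' : ∀ x ∈ Γᶜ, 0 ≤ Δ f x := fun x hx =>
    laplacian_eq_laplacian_of_contDiffAt (hsmooth.contDiffAt (hΓclosed.isOpen_compl.mem_nhds hx))
      ▸ hsub x hx
  obtain ⟨C, hC⟩ := hbdd
  exact fun x hx => le_antisymm
    (nonpos_of_subharmonic_of_tendsto_zero hrank hΓclosed hP hPΓ hsmooth hsub' hC hinf haxis hx)
    (hnonneg x hx)
end
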